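/- arXiv:0808.3048 — 3 statements merged into one kernel-verified Lean document; each statement's English description precedes it below -/
import Mathlib

section
/- Let β₂ > 0 and β₃ be real numbers, and define m = (β₃ + √(β₃² + β₂³/2))/β₂, m' = −β₂/(2m), and t = β₂³ / (2β₂³ + 4β₃(β₃ + √(β₃² + β₂³/2))). Let Z and B be independent real random variables such that Z has the Gaussian distribution N(0, β₂/2) and B satisfies P(B = m) = t and P(B = m') = 1 − t. Then G = Z + B satisfies E(G) = 0, E(G²) = β₂ and E(G³) = β₃. -/
open MeasureTheory ProbabilityTheory Real
open scoped ENNReal NNReal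

/-!
Independence expands `E[(Z + B)ⁿ]` binomially into products of moments of `Z` and of `B`.
The centred Gaussian `Z` has moments `0, β₂/2, 0` (the odd ones vanish by symmetry), and the
two-point law of `B` is tuned to have moments `0, β₂/2, β₃`: `m` is the positive root of
`β₂ x² = 2 β₃ x + β₂²/2`, the weight is `t = β₂ / (β₂ + 2 m²)`, and the quadratic equation is
exactly what makes the third moment equal `β₃`.
-/

instance isNegInvariant_gaussianReal_zero (v : ℝ≥0) : (gaussianReal 0 v).IsNegInvariant :=
  ⟨by simpa [Measure.neg] using gaussianReal_map_neg (μ := 0) (v := v)⟩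

lemma integral_pow_eq_zero_of_odd {μ : Measure ℝ} [μ.IsNegInvariant] {n : ℕ} (hn : Odd n) :
    ∫ x, x ^ n ∂μ = 0 := by
  have h := integral_neg_eq_self (fun x : ℝ ↦ x ^ n) μ
  simp only [hn.neg_pow, integral_neg] at h
  linarith

lemma integrable_pow_gaussianReal (μ : ℝ) (v : ℝ≥0) (n : ℕ) :
    Integrable (fun x : ℝ ↦ x ^ n) (gaussianReal μ v) :=
  integrable_pow_of_mem_interior_integrableExpSet (X := fun x ↦ x) (by simp) n

lemma integral_sq_gaussianReal_zero (v : ℝ≥0) : ∫ x, x ^ 2 ∂gaussianReal 0 v = v := by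
  simpa [variance_eq_integral measurable_id'.aemeasurable] using
    variance_fun_id_gaussianReal (μ := 0) (v := v)

lemma ProbabilityTheory.IndepFun.integral_add_pow {Ω : Type*} {mΩ : MeasurableSpace Ω}
    {P : Measure Ω} {X Y : Ω → ℝ} (hXY : IndepFun X Y P) (hX : ∀ k, Integrable (fun ω ↦ X ω ^ k) P)
    (hY : ∀ k, Integrable (fun ω ↦ Y ω ^ k) P) (n : ℕ) :
    ∫ ω, (X ω + Y ω) ^ n ∂P
      = ∑ k ∈ Finset.range (n + 1), (∫ ω, X ω ^ k ∂P) * (∫ ω, Y ω ^ (n - k) ∂P) * n.choose k := by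
  have hpow : ∀ i j : ℕ, IndepFun (fun ω ↦ X ω ^ i) (fun ω ↦ Y ω ^ j) P := fun i j ↦
    hXY.comp (measurable_id.pow_const i) (measurable_id.pow_const j)
  simp_rw [add_pow]
  rw [integral_finsetSum]
  · refine Finset.sum_congr rfl fun k _ ↦ ?_
    rw [integral_mul_const, (hpow _ _).integral_fun_mul_eq_mul_integral (hX _).1 (hY _).1]
  · exact fun k _ ↦ ((hpow k (n - k)).integrable_mul (hX k) (hY _)).mul_const _

section TwoPoint

variable {Ω : Type*} {mΩ : MeasurableSpace Ω} {P : Measure Ω} {B : Ω → ℝ} {a b p : ℝ}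

lemma ae_eq_or_eq_of_measure_eq [IsProbabilityMeasure P] (hB : Measurable B) (hab : a ≠ b)
    (hp₀ : 0 ≤ p) (hp₁ : p ≤ 1)
    (ha : P {ω | B ω = a} = ENNReal.ofReal p) (hb : P {ω | B ω = b} = ENNReal.ofReal (1 - p)) :
    ∀ᵐ ω ∂P, B ω = a ∨ B ω = b := by
  have hA := measurableSet_eq_fun hB (measurable_const (a := a))
  have hB' := measurableSet_eq_fun hB (measurable_const (a := b))
  have hdisj : Disjoint {ω | B ω = a} {ω | B ω = b} :=
    Set.disjoint_left.2 fun ω ha hb ↦ hab (ha.symm.trans hb)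
  refine (ae_iff_measure_eq (p := fun ω ↦ B ω = a ∨ B ω = b)
    (hA.union hB').nullMeasurableSet).2 ?_
  rw [Set.ofPred_or, measure_union hdisj hB', ha, hb,
    ← ENNReal.ofReal_add hp₀ (by linarith), measure_univ]
  simp

lemma comp_ae_eq_indicator_add_indicator (hB : ∀ᵐ ω ∂P, B ω = a ∨ B ω = b) (hab : a ≠ b)
    (f : ℝ → ℝ) :
    (fun ω ↦ f (B ω)) =ᵐ[P]
      {ω | B ω = a}.indicator (fun _ ↦ f a) + {ω | B ω = b}.indicator (fun _ ↦ f b) := by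
  filter_upwards [hB] with ω hω
  rcases hω with h | h <;> simp [Set.indicator, h, hab, hab.symm]

variable [IsProbabilityMeasure P] (hB : Measurable B) (hab : a ≠ b) (hp₀ : 0 ≤ p) (hp₁ : p ≤ 1)
  (ha : P {ω | B ω = a} = ENNReal.ofReal p) (hb : P {ω | B ω = b} = ENNReal.ofReal (1 - p))
include hB hab hp₀ hp₁ ha hb

lemma integrable_comp_of_measure_eq (f : ℝ → ℝ) : Integrable (fun ω ↦ f (B ω)) P := by
  have hA := measurableSet_eq_fun hB (measurable_const (a := a))
  have hB' := measurableSet_eq_fun hB (measurable_const (a := b))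
  exact (((integrable_const _).indicator hA).add ((integrable_const _).indicator hB')).congr
    (comp_ae_eq_indicator_add_indicator (ae_eq_or_eq_of_measure_eq hB hab hp₀ hp₁ ha hb) hab f).symm

lemma integral_comp_of_measure_eq (f : ℝ → ℝ) :
    ∫ ω, f (B ω) ∂P = p * f a + (1 - p) * f b := by
  have hA := measurableSet_eq_fun hB (measurable_const (a := a))
  have hB' := measurableSet_eq_fun hB (measurable_const (a := b))
  rw [integral_congr_ae
      (comp_ae_eq_indicator_add_indicator (ae_eq_or_eq_of_measure_eq hB hab hp₀ hp₁ ha hb) hab f),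
    integral_add' ((integrable_const _).indicator hA) ((integrable_const _).indicator hB'),
    integral_indicator_const _ hA, integral_indicator_const _ hB', measureReal_def,
    measureReal_def, ha, hb, ENNReal.toReal_ofReal hp₀, ENNReal.toReal_ofReal (by linarith),
    smul_eq_mul, smul_eq_mul]

end TwoPoint

lemma pos_and_quadratic_of_eq_sqrt {β₂ β₃ m : ℝ} (hβ₂ : 0 < β₂)
    (hm : m = (β₃ + √(β₃ ^ 2 + β₂ ^ 3 / 2)) / β₂) :
    0 < m ∧ β₂ * m ^ 2 = 2 * β₃ * m + β₂ ^ 2 / 2 := by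
  set s := √(β₃ ^ 2 + β₂ ^ 3 / 2)
  have hs : s ^ 2 = β₃ ^ 2 + β₂ ^ 3 / 2 := Real.sq_sqrt (by positivity)
  have hβ₂m : β₂ * m = β₃ + s := by rw [hm]; field_simp
  have hβ₃s : 0 < β₃ + s := by nlinarith [Real.sqrt_nonneg (β₃ ^ 2 + β₂ ^ 3 / 2), pow_pos hβ₂ 3]
  refine ⟨by rw [hm]; positivity, mul_left_cancel₀ hβ₂.ne' ?_⟩
  linear_combination (β₂ * m + β₃ + s - 2 * β₃) * hβ₂m + hs

lemma weight_eq_of_eq_sqrt {β₂ β₃ m : ℝ} (hβ₂ : 0 < β₂)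
    (hm : m = (β₃ + √(β₃ ^ 2 + β₂ ^ 3 / 2)) / β₂) :
    β₂ ^ 3 / (2 * β₂ ^ 3 + 4 * β₃ * (β₃ + √(β₃ ^ 2 + β₂ ^ 3 / 2))) = β₂ / (β₂ + 2 * m ^ 2) := by
  have hβ₂m : β₃ + √(β₃ ^ 2 + β₂ ^ 3 / 2) = β₂ * m := by rw [hm]; field_simp
  have hquad := (pos_and_quadratic_of_eq_sqrt hβ₂ hm).2
  rw [hβ₂m, div_eq_div_iff (by nlinarith [sq_nonneg m, pow_pos hβ₂ 3]) (by positivity)]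
  linear_combination 2 * β₂ ^ 2 * hquad

lemma twoPoint_moments {β₂ β₃ m m' t : ℝ} (hβ₂ : 0 < β₂) (hm : 0 < m)
    (hquad : β₂ * m ^ 2 = 2 * β₃ * m + β₂ ^ 2 / 2) (hm' : m' = -β₂ / (2 * m))
    (ht : t = β₂ / (β₂ + 2 * m ^ 2)) :
    t * m + (1 - t) * m' = 0 ∧ t * m ^ 2 + (1 - t) * m' ^ 2 = β₂ / 2 ∧
      t * m ^ 3 + (1 - t) * m' ^ 3 = β₃ := by
  subst hm' ht
  refine ⟨?_, ?_, ?_⟩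
  · field_simp
    ring
  · field_simp
    ring
  · field_simp
    linear_combination (4 * β₂ * m ^ 2 + 8 * m ^ 4) * hquad

/-- **A Gaussian-plus-two-point distribution with prescribed first three moments**
(Dedecker–Rio, Lemma 4.1). -/
theorem stmt_12
    (β₂ β₃ : ℝ) (hβ₂ : 0 < β₂)
    (m m' t : ℝ)
    (hm : m = (β₃ + Real.sqrt (β₃ ^ 2 + β₂ ^ 3 / 2)) / β₂)
    (hm' : m' = -β₂ / (2 * m))
    (ht : t = β₂ ^ 3 / (2 * β₂ ^ 3 + 4 * β₃ * (β₃ + Real.sqrt (β₃ ^ 2 + β₂ ^ 3 / 2))))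
    {Ω : Type*} {mΩ : MeasurableSpace Ω} (P : Measure Ω) [IsProbabilityMeasure P]
    (Z B : Ω → ℝ) (hZmeas : Measurable Z) (hBmeas : Measurable B)
    (hindep : IndepFun Z B P)
    (hZlaw : Measure.map Z P = gaussianReal 0 (Real.toNNReal (β₂ / 2)))
    (hBm : P {ω | B ω = m} = ENNReal.ofReal t)
    (hBm' : P {ω | B ω = m'} = ENNReal.ofReal (1 - t)) :
    (∫ ω, (Z ω + B ω) ∂P) = 0 ∧
    (∫ ω, (Z ω + B ω) ^ 2 ∂P) = β₂ ∧
    (∫ ω, (Z ω + B ω) ^ 3 ∂P) = β₃ := by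
  obtain ⟨hm_pos, hquad⟩ := pos_and_quadratic_of_eq_sqrt hβ₂ hm
  rw [weight_eq_of_eq_sqrt hβ₂ hm] at ht
  obtain ⟨hB₁, hB₂, hB₃⟩ := twoPoint_moments hβ₂ hm_pos hquad hm' ht
  have ht₀ : 0 ≤ t := by rw [ht]; positivity
  have ht₁ : t ≤ 1 := by rw [ht, div_le_one (by positivity)]; nlinarith
  have hm'_neg : m' < 0 := by rw [hm']; exact div_neg_of_neg_of_pos (by linarith) (by linarith)
  have hmm' : m ≠ m' := (hm'_neg.trans hm_pos).ne'
  have hZ : HasLaw Z (gaussianReal 0 (β₂ / 2).toNNReal) P := ⟨hZmeas.aemeasurable, hZlaw⟩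
  have hZint (k : ℕ) : Integrable (fun ω ↦ Z ω ^ k) P :=
    (integrable_map_measure (g := fun x : ℝ ↦ x ^ k) (by fun_prop) hZmeas.aemeasurable).1
      (hZlaw ▸ integrable_pow_gaussianReal 0 _ k)
  have hZpow (k : ℕ) : ∫ ω, Z ω ^ k ∂P = ∫ x, x ^ k ∂gaussianReal 0 (β₂ / 2).toNNReal :=
    hZ.integral_comp (f := (· ^ k)) (by fun_prop)
  have hBint (k : ℕ) := integrable_comp_of_measure_eq hBmeas hmm' ht₀ ht₁ hBm hBm' (· ^ k)
  have hBpow (k : ℕ) := integral_comp_of_measure_eq hBmeas hmm' ht₀ ht₁ hBm hBm' (· ^ k)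
  have hZ₁ : ∫ ω, Z ω ∂P = 0 := by simpa using hZpow 1
  have hZ₂ := integral_sq_gaussianReal_zero (β₂ / 2).toNNReal
  rw [Real.coe_toNNReal _ (by positivity)] at hZ₂
  have hZ₃ := integral_pow_eq_zero_of_odd (μ := gaussianReal 0 (β₂ / 2).toNNReal) (n := 3) ⟨1, rfl⟩
  have hsum := hindep.integral_add_pow hZint hBint
  refine ⟨?_, ?_, ?_⟩
  · simpa [Finset.sum_range_succ, hBpow, hB₁, hZ₁] using hsum 1
  · simpa [Finset.sum_range_succ, hZpow, hBpow, hB₁, hB₂, hZ₂] using hsum 2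
  · simpa [Finset.sum_range_succ, hZpow, hBpow, hB₁, hB₂, hB₃, hZ₂, hZ₃] using hsum 3
end

section
/- Let f: ℝ → ℝ be a 1-Lipschitz function, Y a standard normal random variable, and B a real-valued random variable independent of Y. Then for every t > 0 and every positive integer i, the function x ↦ E f(x + tY + B) is i times differentiable and |d^i/dx^i E f(x + tY + B)| ≤ t^{1-i}·‖φ^{(i-1)}‖_1, where φ denotes the density of the standard normal distribution and ‖φ^{(i-1)}‖_1 is the L¹(ℝ)-norm of its (i−1)-th derivative. -/
/-!
By independence, `E f(x + tY + B) = E g(x + tY)` with `g z = E f(z + B)`, and `g` is again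
1-Lipschitz (it vanishes identically when `f(z + B)` is not integrable, and then so does
`E f(x + tY + B)`). Now `E g(x + tY) = (h ⋆ φ)(-x/t)` with `h u = g(-tu)`, which is
`t`-Lipschitz, and all derivatives can be put on `φ`: the Hermite functions `φ⁽ᵏ⁾` have Gaussian
decay, which beats the linear growth of `h`, so `(h ⋆ φ)⁽ᵏ⁾ = h ⋆ φ⁽ᵏ⁾`. The bound costs one
derivative: `h ⋆ φ⁽ᵏ⁾` is `t‖φ⁽ᵏ⁾‖₁`-Lipschitz, so `|h ⋆ φ⁽ᵏ⁺¹⁾| ≤ t‖φ⁽ᵏ⁾‖₁`, and the chain rule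
for `x ↦ -x/t` contributes `t^{-(k+1)}`.
-/

open MeasureTheory ProbabilityTheory Filter Real Topology Polynomial Asymptotics Convolution
open scoped NNReal

noncomputable section

local notation "φ" => gaussianPDFReal 0 1

lemma Polynomial.exists_abs_eval_mul_exp_neg_sq_le (p : ℝ[X]) :
    ∃ C, ∀ v : ℝ, |p.eval v| * exp (-(v ^ 2 / 2)) ≤ C * exp (-(1 / 4) * v ^ 2) := by
  have hdecay : Tendsto (fun v => p.eval v * exp (-(1 / 4) * v ^ 2)) (cocompact ℝ) (𝓝 0) := by
    have hpoly : p.eval =O[cocompact ℝ] fun v => |v| ^ (p.natDegree : ℝ) := by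
      rw [← Metric.cobounded_eq_cocompact]
      refine (isBigO_cobounded_of_degree_le (Q := X ^ p.natDegree) ?_).trans
        (isBigO_of_le _ fun v => ?_)
      · simp [degree_le_natDegree]
      · simp [rpow_natCast]
    exact (hpoly.mul (isBigO_refl _ _)).trans_tendsto
      (tendsto_rpow_abs_mul_exp_neg_mul_sq_cocompact (by norm_num) _)
  let F : ZeroAtInftyContinuousMap ℝ ℝ := ⟨⟨_, by fun_prop⟩, hdecay⟩
  obtain ⟨C, hC⟩ := isBounded_iff_forall_norm_le.mp F.isBounded_range
  refine ⟨C, fun v => ?_⟩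
  have hv : |p.eval v| * exp (-(1 / 4) * v ^ 2) ≤ C := by
    simpa [F, abs_mul] using hC _ ⟨v, rfl⟩
  calc |p.eval v| * exp (-(v ^ 2 / 2))
      = (|p.eval v| * exp (-(1 / 4) * v ^ 2)) * exp (-(1 / 4) * v ^ 2) := by
        rw [mul_assoc, ← exp_add]; ring_nf
    _ ≤ C * exp (-(1 / 4) * v ^ 2) := by gcongr

def HasGaussianDecay (ψ : ℝ → ℝ) : Prop :=
  ∃ C a : ℝ, 0 < a ∧ ∀ v, |ψ v| ≤ C * exp (-a * v ^ 2)

lemma LipschitzWith.abs_le_abs_add_mul {g : ℝ → ℝ} {K : ℝ≥0} (hg : LipschitzWith K g)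
    (c t : ℝ) : |g t| ≤ |g c| + K * |c - t| := by
  have h := hg.dist_le_mul t c
  rw [Real.dist_eq, Real.dist_eq, abs_sub_comm t] at h
  linarith [abs_sub_abs_le_abs_sub (g t) (g c)]

lemma exp_neg_mul_sq_sub_le {a : ℝ} (ha : 0 ≤ a) {x c : ℝ} (hxc : |x - c| ≤ 1) (t : ℝ) :
    exp (-a * (x - t) ^ 2) ≤ exp a * exp (-(a / 2) * (c - t) ^ 2) := by
  rw [← exp_add, exp_le_exp]
  have : (c - t) ^ 2 ≤ 2 * (x - t) ^ 2 + 2 := by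
    nlinarith [sq_nonneg (x - t + (x - c)), sq_abs (x - c), abs_nonneg (x - c)]
  nlinarith

section Convolution

variable {g ψ ψ' : ℝ → ℝ} {K : ℝ≥0}

lemma LipschitzWith.integrable_mul_exp_neg_mul_sq_sub (hg : LipschitzWith K g) {a : ℝ}
    (ha : 0 < a) (c : ℝ) : Integrable (fun t => g t * exp (-a * (c - t) ^ 2)) := by
  have hdom : Integrable (fun s => |g c| * exp (-a * s ^ 2) + K * ‖s * exp (-a * s ^ 2)‖) :=
    ((integrable_exp_neg_mul_sq ha).const_mul _).add
      ((integrable_mul_exp_neg_mul_sq ha).norm.const_mul _)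
  refine (hdom.comp_sub_left c).mono' (hg.continuous.mul (by fun_prop)).aestronglyMeasurable
    (ae_of_all _ fun t => ?_)
  rw [norm_mul, norm_mul, Real.norm_eq_abs, Real.norm_eq_abs, abs_exp, ← mul_assoc, ← add_mul]
  gcongr
  exact hg.abs_le_abs_add_mul c t

lemma HasGaussianDecay.integrable_mul_comp_sub (hψ : HasGaussianDecay ψ) (hψm : Measurable ψ)
    (hg : LipschitzWith K g) (x : ℝ) : Integrable (fun t => g t * ψ (x - t)) := by
  obtain ⟨C, a, ha, hC⟩ := hψ
  refine ((hg.integrable_mul_exp_neg_mul_sq_sub ha x).norm.const_mul C).mono'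
    (hg.continuous.measurable.mul
      (by fun_prop : Measurable fun t => ψ (x - t))).aestronglyMeasurable
    (ae_of_all _ fun t => ?_)
  rw [norm_mul, norm_mul, Real.norm_eq_abs, Real.norm_eq_abs, Real.norm_eq_abs, abs_exp,
    mul_left_comm]
  exact mul_le_mul_of_nonneg_left (hC _) (abs_nonneg _)

lemma HasGaussianDecay.integrable (hψ : HasGaussianDecay ψ) (hψm : Measurable ψ) :
    Integrable ψ := by
  simpa using hψ.integrable_mul_comp_sub hψm (LipschitzWith.const (1 : ℝ)) 0 |>.comp_sub_left 0

lemma abs_convolution_sub_le (hg : LipschitzWith K g) (hψ : HasGaussianDecay ψ)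
    (hψm : Measurable ψ) (x y : ℝ) :
    |(g ⋆ ψ) x - (g ⋆ ψ) y| ≤ K * (∫ t, |ψ t|) * |x - y| := by
  have hint (z : ℝ) : Integrable (fun t => g (z - t) * ψ t) := by
    simpa using (hψ.integrable_mul_comp_sub hψm hg z).comp_sub_left z
  simp only [convolution_lsmul_swap, smul_eq_mul]
  rw [← integral_sub (hint x) (hint y), mul_right_comm, ← integral_const_mul]
  refine abs_integral_le_integral_abs.trans (integral_mono_of_nonneg
    (ae_of_all _ fun _ => abs_nonneg _) ((hψ.integrable hψm).abs.const_mul _)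
    (ae_of_all _ fun t => ?_))
  dsimp only
  rw [← sub_mul, abs_mul]
  gcongr
  simpa [Real.dist_eq] using hg.dist_le_mul (x - t) (y - t)

lemma abs_le_of_hasDerivAt_convolution (hg : LipschitzWith K g) (hψ : HasGaussianDecay ψ)
    (hψm : Measurable ψ) {L x : ℝ} (hL : HasDerivAt (g ⋆ ψ) L x) :
    |L| ≤ K * ∫ t, |ψ t| := by
  rw [← hL.deriv, ← Real.norm_eq_abs]
  exact norm_deriv_le_of_lip' (by positivity) (Eventually.of_forall fun y => by
    simpa [Real.norm_eq_abs] using abs_convolution_sub_le hg hψ hψm y x)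

lemma hasDerivAt_convolution (hg : LipschitzWith K g) (hψ : HasGaussianDecay ψ)
    (hderiv : ∀ x, HasDerivAt ψ (ψ' x) x) (hψ' : HasGaussianDecay ψ') (c : ℝ) :
    HasDerivAt (g ⋆ ψ) ((g ⋆ ψ') c) c := by
  have hψm : Measurable ψ := (continuous_iff_continuousAt.mpr fun x =>
    (hderiv x).continuousAt).measurable
  have hψ'm : Measurable ψ' := by
    simpa [funext fun x => (hderiv x).deriv] using measurable_deriv ψ
  obtain ⟨C, a, ha, hC⟩ := hψ'
  simp only [convolution_lsmul, smul_eq_mul]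
  refine (hasDerivAt_integral_of_dominated_loc_of_deriv_le (F' := fun x t => g t * ψ' (x - t))
    (bound := fun t => C * exp a * ‖g t * exp (-(a / 2) * (c - t) ^ 2)‖)
    (Metric.closedBall_mem_nhds c one_pos)
    (Eventually.of_forall fun x => (hψ.integrable_mul_comp_sub hψm hg x).aestronglyMeasurable)
    (hψ.integrable_mul_comp_sub hψm hg c)
    (hg.continuous.measurable.mul
      (by fun_prop : Measurable fun t => ψ' (c - t))).aestronglyMeasurable
    ?_
    ((hg.integrable_mul_exp_neg_mul_sq_sub (half_pos ha) c).norm.const_mul _) ?_).2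
  · refine ae_of_all _ fun t x hx => ?_
    rw [Metric.mem_closedBall, Real.dist_eq] at hx
    rw [norm_mul, norm_mul, Real.norm_eq_abs, Real.norm_eq_abs, Real.norm_eq_abs, abs_exp]
    calc |g t| * |ψ' (x - t)| ≤ |g t| * (C * exp (-a * (x - t) ^ 2)) := by gcongr; exact hC _
      _ ≤ |g t| * (C * (exp a * exp (-(a / 2) * (c - t) ^ 2))) := by
        have hC0 : 0 ≤ C := (abs_nonneg _).trans ((hC 0).trans_eq (by simp))
        gcongr
        exact exp_neg_mul_sq_sub_le ha.le hx t
      _ = C * exp a * (|g t| * exp (-(a / 2) * (c - t) ^ 2)) := by ring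
  · exact ae_of_all _ fun t x _ =>
      ((hderiv (x - t)).comp x ((hasDerivAt_id x).sub_const t)).const_mul (g t)
        |>.congr_deriv (by simp)

end Convolution

lemma gaussianPDFReal_zero_one : φ = fun y => (√(2 * π))⁻¹ * exp (-(y ^ 2 / 2)) := by
  funext y
  simp [gaussianPDFReal, neg_div]

lemma iteratedDeriv_gaussianPDFReal_zero_one (k : ℕ) :
    iteratedDeriv k φ = fun y =>
      (√(2 * π))⁻¹ * ((-1) ^ k * aeval y (hermite k) * exp (-(y ^ 2 / 2))) := by
  funext y
  rw [gaussianPDFReal_zero_one, iteratedDeriv_const_mul_field, iteratedDeriv_eq_iterate,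
    deriv_gaussian_eq_hermite_mul_gaussian]

lemma differentiable_iteratedDeriv_gaussianPDFReal (k : ℕ) :
    Differentiable ℝ (iteratedDeriv k φ) := by
  rw [iteratedDeriv_gaussianPDFReal_zero_one]
  have := Polynomial.differentiable_aeval (𝕜 := ℝ) (hermite k)
  fun_prop

lemma hasDerivAt_iteratedDeriv_gaussianPDFReal (k : ℕ) (x : ℝ) :
    HasDerivAt (iteratedDeriv k φ) (iteratedDeriv (k + 1) φ x) x := by
  rw [iteratedDeriv_succ]
  exact (differentiable_iteratedDeriv_gaussianPDFReal k x).hasDerivAt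

lemma hasGaussianDecay_iteratedDeriv_gaussianPDFReal (k : ℕ) :
    HasGaussianDecay (iteratedDeriv k φ) := by
  obtain ⟨C, hC⟩ := ((hermite k).map (Int.castRingHom ℝ)).exists_abs_eval_mul_exp_neg_sq_le
  refine ⟨(√(2 * π))⁻¹ * C, 1 / 4, by norm_num, fun v => ?_⟩
  rw [iteratedDeriv_gaussianPDFReal_zero_one]
  dsimp only
  rw [aeval_def, eval₂_eq_eval_map, mul_assoc]
  simp only [abs_mul, abs_pow, abs_neg, abs_one, one_pow, one_mul, abs_exp, algebraMap_int_eq]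
  rw [abs_of_pos (by positivity), mul_assoc _ C]
  exact mul_le_mul_of_nonneg_left (hC v) (by positivity)

section GaussianSmoothing

open scoped ContDiff

variable {g : ℝ → ℝ} {K : ℝ≥0}

lemma hasDerivAt_convolution_iteratedDeriv_gaussianPDFReal (hg : LipschitzWith K g) (k : ℕ)
    (x : ℝ) : HasDerivAt (g ⋆ iteratedDeriv k φ) ((g ⋆ iteratedDeriv (k + 1) φ) x) x :=
  hasDerivAt_convolution hg (hasGaussianDecay_iteratedDeriv_gaussianPDFReal k)
    (hasDerivAt_iteratedDeriv_gaussianPDFReal k)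
    (hasGaussianDecay_iteratedDeriv_gaussianPDFReal _) x

lemma iteratedDeriv_convolution_gaussianPDFReal (hg : LipschitzWith K g) (k : ℕ) :
    iteratedDeriv k (g ⋆ φ) = g ⋆ iteratedDeriv k φ := by
  induction k with
  | zero => simp
  | succ k ih =>
    rw [iteratedDeriv_succ, ih]
    exact funext fun x => (hasDerivAt_convolution_iteratedDeriv_gaussianPDFReal hg k x).deriv

lemma contDiff_convolution_gaussianPDFReal (hg : LipschitzWith K g) : ContDiff ℝ ∞ (g ⋆ φ) :=
  contDiff_of_differentiable_iteratedDeriv fun k _ => by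
    rw [iteratedDeriv_convolution_gaussianPDFReal hg]
    exact fun x => (hasDerivAt_convolution_iteratedDeriv_gaussianPDFReal hg k x).differentiableAt

lemma abs_convolution_iteratedDeriv_gaussianPDFReal_le (hg : LipschitzWith K g) (k : ℕ)
    (x : ℝ) : |(g ⋆ iteratedDeriv (k + 1) φ) x| ≤ K * ∫ y, |iteratedDeriv k φ y| :=
  abs_le_of_hasDerivAt_convolution hg (hasGaussianDecay_iteratedDeriv_gaussianPDFReal k)
    (differentiable_iteratedDeriv_gaussianPDFReal k).continuous.measurable
    (hasDerivAt_convolution_iteratedDeriv_gaussianPDFReal hg k x)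

lemma integral_gaussianReal_comp_add_mul_eq_convolution (h : ℝ → ℝ) {t : ℝ} (ht : t ≠ 0) :
    (fun x => ∫ y, h (x + t * y) ∂gaussianReal 0 1) =
      fun x => ((fun u => h (-t * u)) ⋆ φ) (-t⁻¹ * x) := by
  funext x
  rw [integral_gaussianReal_eq_integral_smul one_ne_zero, convolution_lsmul_swap]
  congr 1 with y
  rw [smul_eq_mul, smul_eq_mul, mul_comm]
  congr 2
  field_simp
  ring

variable {h : ℝ → ℝ} {t : ℝ}

theorem contDiff_integral_gaussianReal_comp_add_mul (hh : LipschitzWith K h) (ht : t ≠ 0) :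
    ContDiff ℝ ∞ (fun x => ∫ y, h (x + t * y) ∂gaussianReal 0 1) := by
  rw [integral_gaussianReal_comp_add_mul_eq_convolution h ht]
  exact (contDiff_convolution_gaussianPDFReal (hh.comp (lipschitzWith_smul (-t)))).comp
    (contDiff_const.mul contDiff_id)

theorem abs_iteratedDeriv_integral_gaussianReal_comp_add_mul_le (hh : LipschitzWith K h)
    (ht : 0 < t) (k : ℕ) (x : ℝ) :
    |iteratedDeriv (k + 1) (fun x => ∫ y, h (x + t * y) ∂gaussianReal 0 1) x| ≤
      K * t⁻¹ ^ k * ∫ y, |iteratedDeriv k φ y| := by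
  have hh' : LipschitzWith (K * ‖-t‖₊) (fun u => h (-t * u)) :=
    hh.comp (lipschitzWith_smul (-t))
  rw [integral_gaussianReal_comp_add_mul_eq_convolution h ht.ne', iteratedDeriv_comp_const_mul
      ((contDiff_convolution_gaussianPDFReal hh').of_le (mod_cast le_top)),
    iteratedDeriv_convolution_gaussianPDFReal hh', abs_mul, abs_pow, abs_neg, abs_inv,
    abs_of_pos ht]
  calc t⁻¹ ^ (k + 1) * |((fun u => h (-t * u)) ⋆ iteratedDeriv (k + 1) φ) (-t⁻¹ * x)|
      ≤ t⁻¹ ^ (k + 1) * (K * ‖-t‖₊ * ∫ y, |iteratedDeriv k φ y|) := by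
        gcongr
        exact_mod_cast abs_convolution_iteratedDeriv_gaussianPDFReal_le hh' k _
    _ = K * t⁻¹ ^ k * ∫ y, |iteratedDeriv k φ y| := by
        rw [coe_nnnorm, norm_neg, Real.norm_of_nonneg ht.le, pow_succ]
        field_simp

end GaussianSmoothing

section Lipschitz

variable {Ω : Type*} {mΩ : MeasurableSpace Ω} {μ : Measure Ω} {f : ℝ → ℝ} {K : ℝ≥0}

lemma LipschitzWith.integrable_comp_of_integrable_sub (hf : LipschitzWith K f) {U V : Ω → ℝ}
    (hU : AEStronglyMeasurable U μ) (hV : Integrable (fun ω => f (V ω)) μ)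
    (hUV : Integrable (U - V) μ) : Integrable (fun ω => f (U ω)) μ := by
  refine (hV.norm.add (hUV.norm.const_mul K)).mono' (hf.continuous.comp_aestronglyMeasurable hU)
    (ae_of_all _ fun ω => ?_)
  have h := hf.dist_le_mul (U ω) (V ω)
  simp only [Real.dist_eq] at h
  simp only [Pi.add_apply, Pi.sub_apply, Real.norm_eq_abs]
  linarith [abs_sub_abs_le_abs_sub (f (U ω)) (f (V ω))]

variable [IsFiniteMeasure μ] {X : Ω → ℝ}

lemma LipschitzWith.integrable_comp_add_of_integrable (hf : LipschitzWith K f)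
    (hX : AEStronglyMeasurable X μ) {z : ℝ} (hz : Integrable (fun ω => f (z + X ω)) μ) (z' : ℝ) :
    Integrable (fun ω => f (z' + X ω)) μ :=
  hf.integrable_comp_of_integrable_sub (aestronglyMeasurable_const.add hX) hz
    ((integrable_const (z' - z)).congr (ae_of_all _ fun ω => by simp))

lemma LipschitzWith.integral_comp_add [IsProbabilityMeasure μ] (hf : LipschitzWith K f)
    (hX : AEStronglyMeasurable X μ) : LipschitzWith K (fun z => ∫ ω, f (z + X ω) ∂μ) := by
  refine LipschitzWith.of_dist_le_mul fun z z' => ?_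
  by_cases hz' : Integrable (fun ω => f (z' + X ω)) μ
  · have hz := hf.integrable_comp_add_of_integrable hX hz' z
    have hbound (ω : Ω) : ‖f (z + X ω) - f (z' + X ω)‖ ≤ K * dist z z' := by
      simpa [Real.dist_eq] using hf.dist_le_mul (z + X ω) (z' + X ω)
    rw [dist_eq_norm, ← integral_sub hz hz']
    simpa using norm_integral_le_of_norm_le_const (ae_of_all μ hbound)
  · have hz : ¬Integrable (fun ω => f (z + X ω)) μ := fun hz =>
      hz' (hf.integrable_comp_add_of_integrable hX hz z')
    simp only [integral_undef hz, integral_undef hz', dist_self]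
    positivity

end Lipschitz

lemma ProbabilityTheory.IndepFun.integral_comp_eq_integral_integral {Ω α β : Type*}
    {mΩ : MeasurableSpace Ω} {mα : MeasurableSpace α} {mβ : MeasurableSpace β}
    {P : Measure Ω} [IsFiniteMeasure P]
    {X : Ω → α} {Z : Ω → β} (hXZ : IndepFun X Z P) (hX : Measurable X) (hZ : Measurable Z)
    {F : α × β → ℝ} (hF : StronglyMeasurable F) (hFint : Integrable (fun ω => F (X ω, Z ω)) P) :
    ∫ ω, F (X ω, Z ω) ∂P = ∫ x, ∫ ω, F (x, Z ω) ∂P ∂(P.map X) := by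
  have hXZm : Measurable fun ω => (X ω, Z ω) := hX.prodMk hZ
  have hmap : P.map (fun ω => (X ω, Z ω)) = (P.map X).prod (P.map Z) :=
    (indepFun_iff_map_prod_eq_prod_map_map hX.aemeasurable hZ.aemeasurable).1 hXZ
  have hFint' : Integrable F ((P.map X).prod (P.map Z)) := by
    rw [← hmap]
    exact (integrable_map_measure hF.aestronglyMeasurable hXZm.aemeasurable).2 hFint
  calc ∫ ω, F (X ω, Z ω) ∂P = ∫ p, F p ∂((P.map X).prod (P.map Z)) := by
        rw [← hmap, integral_map hXZm.aemeasurable hF.aestronglyMeasurable]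
    _ = ∫ x, ∫ z, F (x, z) ∂(P.map Z) ∂(P.map X) := integral_prod F hFint'
    _ = ∫ x, ∫ ω, F (x, Z ω) ∂P ∂(P.map X) := by
        congr 1 with x
        exact integral_map hZ.aemeasurable
          (hF.comp_measurable measurable_prodMk_left).aestronglyMeasurable

lemma LipschitzWith.integral_comp_add_mul_add_eq {Ω : Type*} {mΩ : MeasurableSpace Ω}
    {P : Measure Ω} [IsFiniteMeasure P] {f : ℝ → ℝ} {K : ℝ≥0} (hf : LipschitzWith K f)
    {Y B : Ω → ℝ} (hYB : IndepFun Y B P) (hY : Measurable Y) (hB : Measurable B)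
    (hYint : Integrable Y P) (x t : ℝ) :
    ∫ ω, f (x + t * Y ω + B ω) ∂P = ∫ y, ∫ ω, f (x + t * y + B ω) ∂P ∂(P.map Y) := by
  have hU : AEStronglyMeasurable (fun ω => x + t * Y ω + B ω) P := by fun_prop
  have htY : Integrable (fun ω => t * Y ω) P := hYint.const_mul t
  by_cases hxB : Integrable (fun ω => f (x + B ω)) P
  · have hint : Integrable (fun ω => f (x + t * Y ω + B ω)) P :=
      hf.integrable_comp_of_integrable_sub hU hxB
        (htY.congr (ae_of_all _ fun ω => by simp only [Pi.sub_apply]; ring))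
    exact hYB.integral_comp_eq_integral_integral hY hB (F := fun p => f (x + t * p.1 + p.2))
      (hf.continuous.comp (by fun_prop)).stronglyMeasurable hint
  · have hint : ¬Integrable (fun ω => f (x + t * Y ω + B ω)) P := fun hint =>
      hxB (hf.integrable_comp_of_integrable_sub (by fun_prop) hint
        (htY.neg.congr (ae_of_all _ fun ω => by simp only [Pi.sub_apply, Pi.neg_apply]; ring)))
    have hint' (y : ℝ) : ¬Integrable (fun ω => f (x + t * y + B ω)) P := fun hy =>
      hxB (hf.integrable_comp_add_of_integrable hB.aestronglyMeasurable hy x)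
    simp [integral_undef hint, integral_undef (hint' _)]

end

/-- **Derivative bounds for Gaussian-smoothed Lipschitz functions**
(Dedecker–Rio, Lemma 2.1). -/
theorem stmt_17
    {Ω : Type*} {mΩ : MeasurableSpace Ω} (P : Measure Ω) [IsProbabilityMeasure P]
    (f : ℝ → ℝ) (hf : LipschitzWith 1 f)
    (Y B : Ω → ℝ) (hYmeas : Measurable Y) (hBmeas : Measurable B)
    (hYlaw : Measure.map Y P = gaussianReal 0 1)
    (hindep : IndepFun Y B P)
    (t : ℝ) (ht : 0 < t) (i : ℕ) (hi : 1 ≤ i) :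
    ContDiff ℝ i (fun x => ∫ ω, f (x + t * Y ω + B ω) ∂P) ∧
    ∀ x : ℝ,
      |iteratedDeriv i (fun x => ∫ ω, f (x + t * Y ω + B ω) ∂P) x| ≤
        t ^ (1 - (i : ℤ)) * ∫ y : ℝ, |iteratedDeriv (i - 1) (gaussianPDFReal 0 1) y| := by
  have hg : LipschitzWith 1 (fun z => ∫ ω, f (z + B ω) ∂P) :=
    hf.integral_comp_add hBmeas.aestronglyMeasurable
  have hYint : Integrable Y P := by
    have hid : Integrable id (P.map Y) := by
      rw [hYlaw, ← memLp_one_iff_integrable]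
      exact_mod_cast memLp_id_gaussianReal 1
    exact (integrable_map_measure aestronglyMeasurable_id hYmeas.aemeasurable).1 hid
  have hrepr : (fun x => ∫ ω, f (x + t * Y ω + B ω) ∂P) =
      fun x => ∫ y, ∫ ω, f (x + t * y + B ω) ∂P ∂gaussianReal 0 1 := by
    funext x
    rw [← hYlaw]
    exact hf.integral_comp_add_mul_add_eq hindep hYmeas hBmeas hYint x t
  obtain ⟨k, rfl⟩ := Nat.exists_eq_add_of_le' hi
  rw [hrepr]
  refine ⟨(contDiff_integral_gaussianReal_comp_add_mul hg ht.ne').of_le (mod_cast le_top),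
    fun x => ?_⟩
  have hpow : t ^ (1 - ((k + 1 : ℕ) : ℤ)) = t⁻¹ ^ k := by
    rw [show 1 - ((k + 1 : ℕ) : ℤ) = -(k : ℤ) by push_cast; ring, zpow_neg, zpow_natCast,
      inv_pow]
  simpa [hpow] using abs_iteratedDeriv_integral_gaussianReal_comp_add_mul_le hg ht k x
end

section
/- Let a be an irrational number badly approximable by rationals, meaning for every ε > 0 the inequality d(ka, ℤ) < |k|^{-1-ε} has only finitely many solutions k ∈ ℤ. Then for every η > 0 there exists a positive constant C such that for every nonnegative integer N and every real p ≥ 2, Σ_{k=2^N}^{2^{N+1}-1} {ka}^{-p} ≤ 2·C^p·2^{p(N+2)(1+η)}, where {x} = d(x, ℤ) denotes the distance from x to the nearest integer. -/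
open Filter Real

/-! The badly approximable hypothesis gives `c > 0` with `|m a - round (m a)| ≥ c |m|^(-1-η)` for
all `m ≠ 0`. Hence, with `μ = c L^(-1-η)`, the signed distances `x_k = k a - round (k a)`,
`0 < k ≤ L`, are `μ`-separated (since `x_k - x_k'` differs from `(k - k') a` by an integer) and
satisfy `|x_k| ≥ μ`. For such points `k ↦ ⌊x_k / μ⌋` is injective into the nonzero integers with
`|⌊x_k / μ⌋| μ ≤ 2 |x_k|`, so `∑ |x_k|^(-p) ≤ (2/μ)^p ∑_{j ≠ 0} j^(-2)`. -/

theorem exists_pos_mul_le_of_finite_setOf_lt {ι : Type*} {s : Set ι} {f g : ι → ℝ}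
    (hf : ∀ i ∈ s, 0 < f i) (hg : ∀ i ∈ s, 0 ≤ g i) (hfin : {i | f i < g i}.Finite) :
    ∃ c > 0, ∀ i ∈ s, c * g i ≤ f i := by
  obtain ⟨B, hB⟩ := (hfin.image fun i => g i / f i).bddAbove
  refine ⟨(max 1 B)⁻¹, by positivity, fun i hi => ?_⟩
  have hB1 : 0 < max 1 B := lt_max_of_lt_left one_pos
  rw [inv_mul_le_iff₀ hB1]
  rcases lt_or_ge (f i) (g i) with hlt | hle
  · have : g i / f i ≤ B := hB ⟨i, hlt, rfl⟩
    rw [div_le_iff₀ (hf i hi)] at this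
    nlinarith [le_max_right 1 B, hf i hi]
  · nlinarith [le_max_left 1 B, hg i hi]

theorem Irrational.exists_pos_mul_rpow_le_abs_sub_round {a η : ℝ} (ha : Irrational a)
    (hfin : {m : ℤ | |(m : ℝ) * a - round ((m : ℝ) * a)| < |(m : ℝ)| ^ (-1 - η)}.Finite) :
    ∃ c > 0, ∀ m : ℤ, m ≠ 0 → c * |(m : ℝ)| ^ (-1 - η) ≤ |(m : ℝ) * a - round ((m : ℝ) * a)| :=
  exists_pos_mul_le_of_finite_setOf_lt (s := {m | m ≠ 0})
    (fun m hm => abs_pos.2 (sub_ne_zero.2 ((ha.intCast_mul hm).ne_int _)))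
    (fun _ _ => by positivity) hfin

section FloorRing

variable {R : Type*} [Field R] [LinearOrder R] [IsStrictOrderedRing R] [FloorRing R]

theorem abs_sub_round_sub_le (x y : R) :
    |(x - y) - round (x - y)| ≤ |(x - round x) - (y - round y)| := by
  have := round_le (x - y) (round x - round y)
  rwa [Int.cast_sub, sub_sub_sub_comm] at this

theorem floor_ne_zero_of_one_le_abs {y : R} (hy : 1 ≤ |y|) : ⌊y⌋ ≠ 0 := by
  intro h
  rw [Int.floor_eq_zero_iff, Set.mem_Ico] at h
  rw [abs_of_nonneg h.1] at hy
  linarith [h.2]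

theorem abs_floor_le_two_mul_abs {y : R} (hy : 1 ≤ |y|) : |(⌊y⌋ : R)| ≤ 2 * |y| := by
  have h1 := Int.floor_le y
  have h2 := Int.lt_floor_add_one y
  rw [abs_le]
  constructor <;> cases abs_cases y <;> linarith

end FloorRing

theorem abs_rpow_neg_le_of_le_abs {x μ p : ℝ} (hμ : 0 < μ) (hx : μ ≤ |x|) (hp : 2 ≤ p) :
    |x| ^ (-p) ≤ 2 ^ p * μ ^ (-p) * (1 / (⌊x / μ⌋ : ℝ) ^ 2) := by
  set j : ℝ := (⌊x / μ⌋ : ℝ)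
  have hy : 1 ≤ |x / μ| := by rwa [abs_div, abs_of_pos hμ, le_div_iff₀ hμ, one_mul]
  have hj1 : 1 ≤ |j| := by
    rw [← Int.cast_abs, ← Int.cast_one, Int.cast_le]
    exact Int.one_le_abs (floor_ne_zero_of_one_le_abs hy)
  have hj2 : |j| * μ ≤ 2 * |x| := by
    have := abs_floor_le_two_mul_abs hy
    rwa [abs_div, abs_of_pos hμ, mul_div_assoc', le_div_iff₀ hμ] at this
  have hj0 : 0 < |j| := by linarith
  calc |x| ^ (-p) ≤ (|j| * μ / 2) ^ (-p) :=
        rpow_le_rpow_of_nonpos (by positivity) (by linarith) (by linarith)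
    _ = 2 ^ p * μ ^ (-p) * |j| ^ (-p) := by
        rw [div_eq_mul_inv, mul_rpow (by positivity) (by norm_num), mul_rpow hj0.le hμ.le,
          inv_rpow (by norm_num), ← rpow_neg_one, ← rpow_mul (by norm_num)]
        ring_nf
    _ ≤ 2 ^ p * μ ^ (-p) * |j| ^ (-2 : ℝ) := by gcongr
    _ = 2 ^ p * μ ^ (-p) * (1 / j ^ 2) := by
        rw [rpow_neg hj0.le, one_div, ← sq_abs]; norm_cast

theorem sum_abs_rpow_neg_le_of_separated {ι : Type*} (s : Finset ι) (x : ι → ℝ) {μ p : ℝ}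
    (hμ : 0 < μ) (hp : 2 ≤ p) (hx : ∀ i ∈ s, μ ≤ |x i|)
    (hsep : ∀ i ∈ s, ∀ j ∈ s, i ≠ j → μ ≤ |x i - x j|) :
    ∑ i ∈ s, |x i| ^ (-p) ≤ 2 ^ p * μ ^ (-p) * ∑' j : ℤ, 1 / (j : ℝ) ^ 2 := by
  have hinj : Set.InjOn (fun i => ⌊x i / μ⌋) s := by
    intro i hi j hj hij
    by_contra hne
    have := Int.abs_sub_lt_one_of_floor_eq_floor hij
    rw [← sub_div, abs_div, abs_of_pos hμ, div_lt_one hμ] at this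
    exact (hsep i hi j hj hne).not_gt this
  calc ∑ i ∈ s, |x i| ^ (-p)
      ≤ ∑ i ∈ s, 2 ^ p * μ ^ (-p) * (1 / (⌊x i / μ⌋ : ℝ) ^ 2) :=
        Finset.sum_le_sum fun i hi => abs_rpow_neg_le_of_le_abs hμ (hx i hi) hp
    _ = 2 ^ p * μ ^ (-p) * ∑ j ∈ s.image (fun i => ⌊x i / μ⌋), 1 / (j : ℝ) ^ 2 := by
        rw [Finset.sum_image hinj, Finset.mul_sum]
    _ ≤ 2 ^ p * μ ^ (-p) * ∑' j : ℤ, 1 / (j : ℝ) ^ 2 := by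
        gcongr
        exact (Real.summable_one_div_int_pow.2 one_lt_two).sum_le_tsum _ (fun _ _ => by positivity)

theorem sum_Ioc_abs_sub_round_rpow_neg_le {a c η p : ℝ} (hc : 0 < c) (hη : -1 ≤ η) (hp : 2 ≤ p)
    (hca : ∀ m : ℤ, m ≠ 0 → c * |(m : ℝ)| ^ (-1 - η) ≤ |(m : ℝ) * a - round ((m : ℝ) * a)|)
    (L : ℕ) :
    ∑ k ∈ Finset.Ioc 0 L, |(k : ℝ) * a - round ((k : ℝ) * a)| ^ (-p) ≤
      (2 / c) ^ p * (∑' j : ℤ, 1 / (j : ℝ) ^ 2) * (L : ℝ) ^ (p * (1 + η)) := by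
  rcases L.eq_zero_or_pos with rfl | hL
  · simp only [Finset.Ioc_self, Finset.sum_empty]
    positivity
  set μ := c * (L : ℝ) ^ (-1 - η)
  have hdist : ∀ m : ℤ, m ≠ 0 → |(m : ℝ)| ≤ L → μ ≤ |(m : ℝ) * a - round ((m : ℝ) * a)| :=
    fun m hm hmL => (mul_le_mul_of_nonneg_left
      (rpow_le_rpow_of_nonpos (by positivity) hmL (by linarith)) hc.le).trans (hca m hm)
  have hsum := sum_abs_rpow_neg_le_of_separated (Finset.Ioc 0 L)
    (fun k : ℕ => (k : ℝ) * a - round ((k : ℝ) * a)) (μ := μ) (by positivity) hp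
    (fun k hk => by
      rw [Finset.mem_Ioc] at hk
      simpa using hdist k (by omega) (by simpa using hk.2))
    (fun k hk k' hk' hne => by
      rw [Finset.mem_Ioc] at hk hk'
      refine (hdist (k - k') (by omega) ?_).trans ?_
      · rw [← Int.cast_abs]
        exact_mod_cast (show |(k : ℤ) - k'| ≤ L by rw [abs_le]; omega)
      · push_cast
        rw [sub_mul]
        exact abs_sub_round_sub_le _ _)
  have hμp : 2 ^ p * μ ^ (-p) = (2 / c) ^ p * (L : ℝ) ^ (p * (1 + η)) := by
    rw [mul_rpow hc.le (by positivity), ← rpow_mul (by positivity), div_rpow (by norm_num) hc.le,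
      rpow_neg hc.le]
    ring_nf
  rwa [hμp, mul_right_comm] at hsum

/-- **Dyadic-block bounds on negative-power sums of `{ka}` for badly approximable `a`**
(Dedecker–Rio, Lemma 5.1). -/
theorem stmt_18
    (a : ℝ) (hairr : Irrational a)
    (hbad : ∀ ε : ℝ, 0 < ε →
      {k : ℤ | |(k : ℝ) * a - round ((k : ℝ) * a)| < |(k : ℝ)| ^ (-(1 : ℝ) - ε)}.Finite)
    (η : ℝ) (hη : 0 < η) :
    ∃ C : ℝ, 0 < C ∧ ∀ N : ℕ, ∀ p : ℝ, 2 ≤ p →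
      ∑ k ∈ Finset.Ico (2 ^ N : ℕ) (2 ^ (N + 1)),
          |(k : ℝ) * a - round ((k : ℝ) * a)| ^ (-p) ≤
        2 * C ^ p * (2 : ℝ) ^ (p * (N + 2) * (1 + η)) := by
  obtain ⟨c, hc, hca⟩ := hairr.exists_pos_mul_rpow_le_abs_sub_round (hbad η hη)
  set T : ℝ := ∑' j : ℤ, 1 / (j : ℝ) ^ 2
  refine ⟨2 / c * max 1 T, by positivity, fun N p hp => ?_⟩
  have hblock : Finset.Ico (2 ^ N) (2 ^ (N + 1)) ⊆ Finset.Ioc 0 (2 ^ (N + 1)) := fun k hk => by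
    simp only [Finset.mem_Ico, Finset.mem_Ioc] at hk ⊢
    exact ⟨(Nat.two_pow_pos N).trans_le hk.1, hk.2.le⟩
  calc _ ≤ ∑ k ∈ Finset.Ioc (0 : ℕ) (2 ^ (N + 1)), |(k : ℝ) * a - round ((k : ℝ) * a)| ^ (-p) :=
        Finset.sum_le_sum_of_subset_of_nonneg hblock fun _ _ _ => by positivity
    _ ≤ (2 / c) ^ p * T * (((2 ^ (N + 1) : ℕ) : ℝ)) ^ (p * (1 + η)) :=
        sum_Ioc_abs_sub_round_rpow_neg_le hc (by linarith) hp hca _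
    _ = (2 / c) ^ p * T * (2 : ℝ) ^ (p * (N + 1) * (1 + η)) := by
        rw [Nat.cast_pow, Nat.cast_ofNat, ← rpow_natCast, ← rpow_mul (by norm_num)]
        push_cast
        ring_nf
    _ ≤ 1 * (2 / c * max 1 T) ^ p * (2 : ℝ) ^ (p * (N + 2) * (1 + η)) := by
        rw [one_mul, mul_rpow (by positivity) (by positivity)]
        gcongr
        · exact (le_max_right 1 T).trans (self_le_rpow_of_one_le (le_max_left 1 T) (by linarith))
        · norm_num
        · linarith
    _ ≤ _ := by gcongr; norm_num
end
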